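/- Let R be a reduced Noetherian ring of prime characteristic p whose integral closure R̄ in its total ring of fractions is a finitely generated R-module. Then there exists a power Q of p such that for every x ∈ R outside the union of the minimal primes of R, ((xR)^F)^[Q] = (xR)^[Q], i.e. y ∈ (xR)^F implies y^Q ∈ x^Q R. -/

import Mathlib

set_option synthInstance.maxHeartbeats 1000000

/-- The `q`-th Frobenius power of a set `S`: the ideal generated by `q`-th powers
of elements of `S`. -/
def frobPow {R : Type*} [CommRing R] (S : Set R) (q : ℕ) : Ideal R :=
  Ideal.span ((· ^ q) '' S)

/-- The Frobenius closure of an ideal `I` in a ring of characteristic `p`. -/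
def frobClosure {R : Type*} [CommRing R] (p : ℕ) (I : Ideal R) : Set R :=
  {r | ∃ n : ℕ, r ^ p ^ n ∈ frobPow (I : Set R) (p ^ n)}

/-!
For `x` a nonzerodivisor, `y ∈ (xR)^F` means that `z = y / x` in the total ring of fractions `K`
has some power `z ^ p ^ n` in `R`; then `z` is integral over `R`. The `R`-submodules
`{a ∈ R̄ | a ^ p ^ n ∈ R}` of `R̄` increase with `n` (they are submodules because Frobenius is
additive), so they stabilise at some `e` since `R̄` is a Noetherian `R`-module. Hence
`z ^ p ^ e ∈ R`, i.e. `y ^ p ^ e ∈ x ^ p ^ e R`, with `e` independent of `x` and `y`.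
-/

open scoped nonZeroDivisors

section FrobeniusClosure

variable {R : Type*} [CommRing R]

lemma frobPow_mono {S T : Set R} (h : S ⊆ T) (q : ℕ) : frobPow S q ≤ frobPow T q :=
  Ideal.span_mono (Set.image_mono h)

lemma frobPow_le_iff {S : Set R} {q : ℕ} {I : Ideal R} :
    frobPow S q ≤ I ↔ ∀ s ∈ S, s ^ q ∈ I := by
  rw [frobPow, Ideal.span_le, Set.image_subset_iff]
  rfl

lemma frobPow_span_singleton (x : R) (q : ℕ) :
    frobPow ((Ideal.span {x} : Ideal R) : Set R) q = Ideal.span {x ^ q} := by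
  refine le_antisymm (frobPow_le_iff.2 fun a ha => ?_) ?_
  · exact Ideal.mem_span_singleton.2 (pow_dvd_pow_of_dvd (Ideal.mem_span_singleton.1 ha) q)
  · rw [Ideal.span_le, Set.singleton_subset_iff]
    exact Ideal.subset_span ⟨x, Ideal.mem_span_singleton_self x, rfl⟩

lemma subset_frobClosure (p : ℕ) (I : Ideal R) : (I : Set R) ⊆ frobClosure p I :=
  fun a ha => ⟨0, by
    rw [pow_zero, pow_one]
    exact Ideal.subset_span ⟨a, ha, pow_one a⟩⟩

lemma mem_frobClosure_span_singleton {p : ℕ} {x y : R} :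
    y ∈ frobClosure p (Ideal.span {x}) ↔ ∃ n : ℕ, x ^ p ^ n ∣ y ^ p ^ n := by
  simp only [frobClosure, Set.mem_ofPred_eq, frobPow_span_singleton, Ideal.mem_span_singleton]

end FrobeniusClosure

lemma mem_nonZeroDivisors_of_forall_notMem_minimalPrimes {R : Type*} [CommRing R] [IsReduced R]
    {x : R} (hx : ∀ P ∈ minimalPrimes R, x ∉ P) : x ∈ R⁰ := by
  refine mem_nonZeroDivisors_iff_right.2 fun z hzx => ?_
  have hz : z ∈ sInf (minimalPrimes R) := Ideal.mem_sInf.2 fun {P} hP =>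
    (hP.1.1.mem_or_mem (hzx ▸ P.zero_mem)).resolve_right (hx P hP)
  rw [minimalPrimes, Ideal.sInf_minimalPrimes] at hz
  exact IsNilpotent.eq_zero hz

lemma IsLocalization.mk'_mem_bot_iff_dvd {R S : Type*} [CommRing R] [CommRing S] [Algebra R S]
    {M : Submonoid R} [IsLocalization M S] (hM : M ≤ R⁰) (a : R) (b : M) :
    IsLocalization.mk' S a b ∈ (⊥ : Subalgebra R S) ↔ (b : R) ∣ a := by
  constructor
  · intro h
    obtain ⟨r, hr⟩ := Algebra.mem_bot.1 h
    rw [eq_comm, IsLocalization.mk'_eq_iff_eq_mul, ← map_mul] at hr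
    exact ⟨r, mul_comm r (b : R) ▸ IsLocalization.injective S hM hr⟩
  · rintro ⟨c, rfl⟩
    exact ⟨c, (IsLocalization.mk'_mul_cancel_left c b).symm⟩

lemma WellFoundedGT.exists_forall_le {α : Type*} [PartialOrder α] [WellFoundedGT α]
    (f : ℕ →o α) : ∃ e, ∀ n, f n ≤ f e := by
  obtain ⟨e, he⟩ := WellFoundedGT.monotone_chain_condition f
  exact ⟨e, fun n => (le_total n e).elim (fun h => f.monotone h) fun h => (he n h).ge⟩

section FrobeniusRoots

variable (R : Type*) {S : Type*} [CommRing R] [CommRing S] [Algebra R S] (p : ℕ) [ExpChar S p]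

def frobRootSubmodule (n : ℕ) : Submodule R S where
  carrier := {a | a ^ p ^ n ∈ (⊥ : Subalgebra R S)}
  add_mem' {a b} ha hb := by
    simp only [Set.mem_ofPred_eq, add_pow_expChar_pow] at *
    exact add_mem ha hb
  zero_mem' := by
    simp [zero_pow (expChar_pow_pos S p n).ne']
  smul_mem' r a ha := by
    simp only [Set.mem_ofPred_eq, smul_pow] at *
    exact Subalgebra.smul_mem _ ha _

variable {R p}

lemma mem_frobRootSubmodule {n : ℕ} {a : S} :
    a ∈ frobRootSubmodule R p n ↔ a ^ p ^ n ∈ (⊥ : Subalgebra R S) :=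
  Iff.rfl

lemma frobRootSubmodule_mono : Monotone (frobRootSubmodule R (S := S) p) := by
  intro m n hmn a ha
  obtain ⟨k, rfl⟩ := Nat.exists_eq_add_of_le hmn
  rw [mem_frobRootSubmodule, pow_add, pow_mul]
  exact pow_mem (mem_frobRootSubmodule.1 ha) _

lemma IsIntegral.of_pow_mem_bot {a : S} {n : ℕ} (hn : 0 < n) (ha : a ^ n ∈ (⊥ : Subalgebra R S)) :
    IsIntegral R a := by
  obtain ⟨r, hr⟩ := ha
  exact IsIntegral.of_pow hn (hr ▸ isIntegral_algebraMap)

theorem exists_forall_pow_mem_bot [IsNoetherianRing R] [Module.Finite R (integralClosure R S)] :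
    ∃ e : ℕ, ∀ (z : S) (n : ℕ), z ^ p ^ n ∈ (⊥ : Subalgebra R S) →
      z ^ p ^ e ∈ (⊥ : Subalgebra R S) := by
  let ι := (integralClosure R S).val.toLinearMap
  have : IsNoetherian R (integralClosure R S) := isNoetherian_of_isNoetherianRing_of_finite _ _
  obtain ⟨e, he⟩ := WellFoundedGT.exists_forall_le
    ⟨fun n => (frobRootSubmodule R p n).comap ι,
      fun _ _ h => Submodule.comap_mono (frobRootSubmodule_mono h)⟩
  refine ⟨e, fun z n hz => ?_⟩
  have hzint : IsIntegral R z := IsIntegral.of_pow_mem_bot (expChar_pow_pos S p n) hz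
  exact he n (x := ⟨z, hzint⟩) hz

end FrobeniusRoots

/-- if `R` is a reduced Noetherian ring of characteristic `p` whose integral
closure in its total ring of fractions is module-finite over `R`, then there is a power
`Q` of `p` with `((xR)^F)^{[Q]} = (xR)^{[Q]}` for every `x` outside all minimal primes. -/
theorem uniform_frobenius_closure_principal {R : Type*} [CommRing R] [IsNoetherianRing R]
    [IsReduced R] (p : ℕ) (hp : p.Prime) [CharP R p]
    (hfin : Module.Finite R (integralClosure R (FractionRing R))) :
    ∃ e : ℕ, ∀ x : R, (∀ P ∈ minimalPrimes R, x ∉ P) →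
      frobPow (frobClosure p (Ideal.span {x})) (p ^ e) =
        frobPow ((Ideal.span {x} : Ideal R) : Set R) (p ^ e) := by
  let K := FractionRing R
  have : Fact p.Prime := ⟨hp⟩
  have : CharP K p := charP_of_injective_algebraMap (IsFractionRing.injective R K) p
  obtain ⟨e, he⟩ := exists_forall_pow_mem_bot (R := R) (S := K) (p := p)
  refine ⟨e, fun x hx => le_antisymm ?_ (frobPow_mono (subset_frobClosure p _) _)⟩
  let x' : R⁰ := ⟨x, mem_nonZeroDivisors_of_forall_notMem_minimalPrimes hx⟩
  have mk'_pow_mem_bot_iff (y : R) (q : ℕ) :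
      IsLocalization.mk' K y x' ^ q ∈ (⊥ : Subalgebra R K) ↔ x ^ q ∣ y ^ q := by
    rw [← IsLocalization.mk'_pow, IsLocalization.mk'_mem_bot_iff_dvd le_rfl]
    rfl
  rw [frobPow_span_singleton, frobPow_le_iff]
  intro y hy
  obtain ⟨n, hn⟩ := mem_frobClosure_span_singleton.1 hy
  exact Ideal.mem_span_singleton.2
    ((mk'_pow_mem_bot_iff y _).1 (he _ n ((mk'_pow_mem_bot_iff y _).2 hn)))
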